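/- In a group with elements x₂, x₅, x₆, ..., x_{n+4} satisfying [x₂⁻¹ x_i x₂, x_j] = e for all 6 ≤ i < j ≤ n+4 and (x₂ x_i)² = (x_i x₂)² for all 6 ≤ i ≤ n+4 and 2-element relation (x₂x₁)²=(x₁x₂)² for x₁ := x_{n+4}⋯x₆, the relation (x₂ · x_{n+4} ⋯ x₆)² = (x_{n+4} ⋯ x₆ · x₂)² is a consequence of the other relations. -/

import Mathlib

/-- Key braid lemma: if `a` braids with `y` and with `p`, and `a⁻¹pa` commutes with `y`,
then `a` braids with `y*p`. -/
private lemma braid_key {G : Type*} [Group G] (a y p : G)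
    (h1 : (a * y) ^ 2 = (y * a) ^ 2) (h2 : (a * p) ^ 2 = (p * a) ^ 2)
    (h3 : (a⁻¹ * p * a) * y = y * (a⁻¹ * p * a)) :
    (a * (y * p)) ^ 2 = ((y * p) * a) ^ 2 := by
  calc (a * (y * p)) ^ 2
      = (a * y * a) * ((a⁻¹ * p * a) * y) * p := by simp only [sq]; group
    _ = (a * y * a) * (y * (a⁻¹ * p * a)) * p := by rw [h3]
    _ = (a * y) ^ 2 * (a⁻¹ * (p * a * p)) := by simp only [sq]; group
    _ = (y * a) ^ 2 * (a⁻¹ * (p * a * p)) := by rw [h1]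
    _ = (y * a * y * a⁻¹) * (a * p) ^ 2 := by simp only [sq]; group
    _ = (y * a * y * a⁻¹) * (p * a) ^ 2 := by rw [h2]
    _ = (y * a) * (y * (a⁻¹ * p * a)) * (p * a) := by simp only [sq]; group
    _ = (y * a) * ((a⁻¹ * p * a) * y) * (p * a) := by rw [← h3]
    _ = ((y * p) * a) ^ 2 := by simp only [sq]; group

private lemma conj_prod_comm {G : Type*} [Group G] (a z : G) (x : ℕ → G) (l : List ℕ)
    (h : ∀ i ∈ l, (a⁻¹ * x i * a) * z = z * (a⁻¹ * x i * a)) :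
    (a⁻¹ * (l.map x).prod * a) * z = z * (a⁻¹ * (l.map x).prod * a) := by
  induction l with
  | nil => simp
  | cons hd tl ih =>
    have hsplit : a⁻¹ * ((hd :: tl).map x).prod * a
        = (a⁻¹ * x hd * a) * (a⁻¹ * (tl.map x).prod * a) := by
      simp only [List.map_cons, List.prod_cons]; group
    rw [hsplit]
    have h1 : Commute (a⁻¹ * x hd * a) z := h hd (by simp)
    have h2 : Commute (a⁻¹ * (tl.map x).prod * a) z :=
      ih (fun i hi => h i (List.mem_cons_of_mem _ hi))
    exact (h1.mul_left h2).eq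

/-- Given elements `x₂, x₆, …, x_{n+4}` of a group with `(x₂x_i)² = (x_ix₂)²` for all
`6 ≤ i ≤ n+4` and `[x₂⁻¹x_ix₂, x_j] = e` for all `6 ≤ i < j ≤ n+4`, the relation
`(x₂ · x_{n+4}⋯x₆)² = (x_{n+4}⋯x₆ · x₂)²` follows. -/
theorem stmt_19 {G : Type*} [Group G] (n : ℕ) (x : ℕ → G)
    (hpow : ∀ i, 6 ≤ i → i ≤ n + 4 → (x 2 * x i) ^ 2 = (x i * x 2) ^ 2)
    (hcom : ∀ i j, 6 ≤ i → i < j → j ≤ n + 4 →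
      ((x 2)⁻¹ * x i * x 2) * x j = x j * ((x 2)⁻¹ * x i * x 2)) :
    (x 2 * ((List.range' 6 (n - 1)).reverse.map x).prod) ^ 2 =
      (((List.range' 6 (n - 1)).reverse.map x).prod * x 2) ^ 2 := by
  have H : ∀ k, 6 + k ≤ n + 5 →
      (x 2 * ((List.range' 6 k).reverse.map x).prod) ^ 2 =
        (((List.range' 6 k).reverse.map x).prod * x 2) ^ 2 := by
    intro k
    induction k with
    | zero => intro _; simp
    | succ k ih =>
      intro hk
      have hk6 : 6 + k ≤ n + 4 := by omega
      have hrange : List.range' 6 (k + 1) = List.range' 6 k ++ [6 + k] := by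
        simpa using List.range'_concat (step := 1) (s := 6) (n := k)
      rw [hrange, List.reverse_append]
      simp only [List.reverse_singleton, List.singleton_append, List.map_cons, List.prod_cons]
      apply braid_key
      · exact hpow (6 + k) (by omega) hk6
      · exact ih (by omega)
      · apply conj_prod_comm
        intro i hi
        rw [List.mem_reverse, List.mem_range'_1] at hi
        exact hcom i (6 + k) hi.1 (by omega) hk6
  match n with
  | 0 => simp
  | Nat.succ m => exact H m (by omega)
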